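/- arXiv:1602.07072 — 2 statements merged into one kernel-verified Lean document; each statement's English description precedes it below -/
import Mathlib

section
/- Future spheres are homothetic images of the visible part of K: for p ∈ Ω and r > 0, let S(p,r) = {q ∈ Ω : p < q ∧ F(p,q) = r} (the future sphere of center p and radius r) and let B(p) = {b(p,q) : q ∈ Ω, p < q} ⊆ K (the part of K visible from p). Then S(p,r) is exactly the image of B(p) under the homothety x ↦ p + (1 − Real.exp (−r)) • (x − p) of center p and ratio 1 − e^{−r}. -/
open RealInnerProductSpace
open scoped Classical

noncomputable section

/-- Euclidean space of dimension `n`. -/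
abbrev Euc (n : ℕ) := EuclideanSpace ℝ (Fin n)

/-- The exterior `Ω = E \ closure I` of the convex set `I`. -/
def Omega {n : ℕ} (I : Set (Euc n)) : Set (Euc n) := (closure I)ᶜ

/-- The timelike Funk partial order: `p < q` iff `p ≠ q`, the segment `[p,q]` lies in `Ω`,
and the ray from `p` through `q` enters `I` beyond `q`. -/
def funkLt {n : ℕ} (I : Set (Euc n)) (p q : Euc n) : Prop :=
  p ≠ q ∧ segment ℝ p q ⊆ Omega I ∧ ∃ t > (0:ℝ), q + t • (q - p) ∈ I

/-- The parameter at which the ray from `p` through `q` first hits `closure I` (beyond `q`). -/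
def funkT0 {n : ℕ} (I : Set (Euc n)) (p q : Euc n) : ℝ :=
  sInf {t : ℝ | 0 < t ∧ q + t • (q - p) ∈ closure I}

/-- The point `b(p,q)` where the ray from `p` through `q` first hits `K = frontier I`. -/
def funkB {n : ℕ} (I : Set (Euc n)) (p q : Euc n) : Euc n :=
  q + funkT0 I p q • (q - p)

/-- The timelike Funk metric `F(p,q) = log (dist p b(p,q) / dist q b(p,q))`, with `F(p,p) = 0`. -/
def funkF {n : ℕ} (I : Set (Euc n)) (p q : Euc n) : ℝ :=
  if p = q then 0 else Real.log (dist p (funkB I p q) / dist q (funkB I p q))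

/-- Supporting hyperplanes of `I`, encoded as pairs `(u, c)` with `‖u‖ = 1`:
`I ⊆ {x | ⟪u,x⟫ < c}` and `closure I` meets `{x | ⟪u,x⟫ = c}`. -/
def SuppH {n : ℕ} (I : Set (Euc n)) : Set (Euc n × ℝ) :=
  {uc | ‖uc.1‖ = 1 ∧ I ⊆ {x | ⟪uc.1, x⟫ < uc.2} ∧
    (closure I ∩ {x | ⟪uc.1, x⟫ = uc.2}).Nonempty}

/-- `𝒫(z)`: supporting hyperplanes of `I` separating `z` from `I`. -/
def SuppHSep {n : ℕ} (I : Set (Euc n)) (z : Euc n) : Set (Euc n × ℝ) :=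
  {uc | uc ∈ SuppH I ∧ uc.2 < ⟪uc.1, z⟫}

/-- `D(p)`: the cone of timelike directions at `p`. -/
def Dcone {n : ℕ} (I : Set (Euc n)) (p : Euc n) : Set (Euc n) :=
  {v | ∃ t > (0:ℝ), p + t • v ∈ I}

/-- `τ(p,v)`: the time for the ray `p + t • v` to reach `closure I`. -/
def tauF {n : ℕ} (I : Set (Euc n)) (p v : Euc n) : ℝ :=
  sInf {t : ℝ | 0 < t ∧ p + t • v ∈ closure I}

/-- The timelike Minkowski functional `P(p,v) = 1/τ(p,v)` of the timelike Funk metric. -/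
def Pmink {n : ℕ} (I : Set (Euc n)) (p v : Euc n) : ℝ := 1 / tauF I p v

/-! Parametrize the ray from `p` through `q` as `s ↦ lineMap p q s`. Then `b(p,q)` is the point
at time `T = 1 + t₀(p,q)`, the ray avoids `closure I` before `T`, and
`F(p,q) = log (T / (T - 1))`. The point at any time `0 < a < T` is again in the future of `p`,
with the same first hitting point `b(p,q)`, and its distance from `p` is `r` exactly when
`a = (1 - e^{-r}) T`. -/

open AffineMap Set

lemma add_smul_sub_eq_lineMap {V : Type*} [AddCommGroup V] [Module ℝ V] (p q : V) (t : ℝ) :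
    q + t • (q - p) = lineMap p q (1 + t) := by
  rw [lineMap_apply_module']
  module

lemma lineMap_add_smul_sub_eq_lineMap {V : Type*} [AddCommGroup V] [Module ℝ V] (p q : V)
    (a t : ℝ) : lineMap p q a + t • (lineMap p q a - p) = lineMap p q ((1 + t) * a) := by
  rw [add_smul_sub_eq_lineMap, lineMap_lineMap_right]

lemma log_one_add_div_self_eq_iff {t r : ℝ} (ht : 0 < t) :
    Real.log ((1 + t) / t) = r ↔ (1 - Real.exp (-r)) * (1 + t) = 1 := by
  have hpos : 0 < (1 + t) / t := by positivity
  rw [← Real.exp_eq_exp, Real.exp_log hpos, Real.exp_neg, div_eq_iff ht.ne']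
  field_simp
  constructor <;> intro h <;> linarith

section

variable {n : ℕ} {I : Set (Euc n)} {p q : Euc n}

lemma funkB_eq_lineMap (I : Set (Euc n)) (p q : Euc n) :
    funkB I p q = lineMap p q (1 + funkT0 I p q) :=
  add_smul_sub_eq_lineMap p q _

lemma funkLt.isLeast_funkT0 (h : funkLt I p q) :
    IsLeast {t | 0 < t ∧ q + t • (q - p) ∈ closure I} (funkT0 I p q) := by
  obtain ⟨-, hseg, t, ht, htI⟩ := h
  have hq : q ∉ closure I := hseg (right_mem_segment ℝ p q)
  -- Since `q ∉ closure I`, the condition `0 < t` may be relaxed to the closed one `0 ≤ t`.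
  have hS : {t | 0 < t ∧ q + t • (q - p) ∈ closure I} =
      Ici 0 ∩ (fun t : ℝ => q + t • (q - p)) ⁻¹' closure I := by
    ext s
    simp only [mem_ofPred_eq, mem_inter_iff, mem_Ici, mem_preimage]
    refine ⟨fun hs => ⟨hs.1.le, hs.2⟩, fun ⟨hs0, hs⟩ => ⟨hs0.lt_of_ne ?_, hs⟩⟩
    rintro rfl
    exact hq (by simpa using hs)
  rw [funkT0, hS]
  exact (isClosed_Ici.inter (isClosed_closure.preimage (by fun_prop))).isLeast_csInf
    ⟨t, ht.le, subset_closure htI⟩ ⟨0, fun _ hs => hs.1⟩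

lemma funkLt.funkT0_pos (h : funkLt I p q) : 0 < funkT0 I p q :=
  h.isLeast_funkT0.1.1

lemma funkLt.funkB_mem_closure (h : funkLt I p q) : funkB I p q ∈ closure I :=
  h.isLeast_funkT0.1.2

lemma funkLt.funkT0_le (h : funkLt I p q) {t : ℝ} (ht : 0 < t) (htI : q + t • (q - p) ∈ I) :
    funkT0 I p q ≤ t :=
  h.isLeast_funkT0.2 ⟨ht, subset_closure htI⟩

lemma funkLt.lineMap_notMem_closure (h : funkLt I p q) {s : ℝ} (hs0 : 0 ≤ s)
    (hsT : s < 1 + funkT0 I p q) : lineMap p q s ∉ closure I := by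
  rcases le_or_gt s 1 with hs1 | hs1
  · exact h.2.1 (segment_eq_image_lineMap ℝ p q ▸ mem_image_of_mem _ ⟨hs0, hs1⟩)
  · intro hmem
    have : funkT0 I p q ≤ s - 1 :=
      h.isLeast_funkT0.2 ⟨by linarith, by rwa [add_smul_sub_eq_lineMap, add_sub_cancel]⟩
    linarith

lemma funkLt.funkF_eq (h : funkLt I p q) :
    funkF I p q = Real.log ((1 + funkT0 I p q) / funkT0 I p q) := by
  have ht := h.funkT0_pos
  have hpq : dist p q ≠ 0 := dist_ne_zero.2 h.1
  have hqb : dist q (funkB I p q) = funkT0 I p q * dist p q := by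
    have := dist_lineMap_lineMap p q (1 : ℝ) (1 + funkT0 I p q)
    rwa [lineMap_apply_one, Real.dist_eq, sub_add_cancel_left, abs_neg, abs_of_pos ht,
      ← funkB_eq_lineMap] at this
  rw [funkF, if_neg h.1, hqb, funkB_eq_lineMap, dist_left_lineMap,
    Real.norm_of_nonneg (by linarith), mul_div_mul_right _ _ hpq]

lemma funkLt_lineMap {a : ℝ} (h : funkLt I p q) (ha : 0 < a) (haT : a < 1 + funkT0 I p q) :
    funkLt I p (lineMap p q a) := by
  obtain ⟨t, ht, htI⟩ := h.2.2
  have htT := h.funkT0_le ht htI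
  refine ⟨fun hp => h.1 ?_, ?_, (1 + t) / a - 1, ?_, ?_⟩
  · simpa [ha.ne'] using hp.symm
  · rw [segment_eq_image_lineMap]
    rintro _ ⟨θ, ⟨hθ0, hθ1⟩, rfl⟩
    rw [lineMap_lineMap_right]
    exact h.lineMap_notMem_closure (by positivity) (by nlinarith)
  · rw [gt_iff_lt, sub_pos, one_lt_div ha]
    linarith
  · rw [lineMap_add_smul_sub_eq_lineMap, add_sub_cancel, div_mul_cancel₀ _ ha.ne',
      ← add_smul_sub_eq_lineMap]
    exact htI

lemma funkLt.funkT0_lineMap {a : ℝ} (h : funkLt I p q) (ha : 0 < a) (haT : a < 1 + funkT0 I p q) :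
    funkT0 I p (lineMap p q a) = (1 + funkT0 I p q) / a - 1 := by
  refine IsLeast.csInf_eq ⟨⟨?_, ?_⟩, ?_⟩
  · rw [sub_pos, one_lt_div ha]
    exact haT
  · rw [lineMap_add_smul_sub_eq_lineMap, add_sub_cancel, div_mul_cancel₀ _ ha.ne',
      ← funkB_eq_lineMap]
    exact h.funkB_mem_closure
  · rintro t ⟨ht, hmem⟩
    rw [lineMap_add_smul_sub_eq_lineMap] at hmem
    have hT : 1 + funkT0 I p q ≤ (1 + t) * a :=
      not_lt.1 fun hlt => h.lineMap_notMem_closure (by positivity) hlt hmem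
    rw [sub_le_iff_le_add, div_le_iff₀ ha]
    linarith

end

theorem futureSphere_eq_homothety_image_general {n : ℕ} (I : Set (Euc n))
    (p : Euc n) (r : ℝ) (hr : 0 < r) :
    {q | q ∈ Omega I ∧ funkLt I p q ∧ funkF I p q = r} =
      (fun x => p + (1 - Real.exp (-r)) • (x - p)) ''
        {x | ∃ q ∈ Omega I, funkLt I p q ∧ funkB I p q = x} := by
  have hc0 : 0 < 1 - Real.exp (-r) := sub_pos.2 (Real.exp_lt_one_iff.2 (neg_neg_of_pos hr))
  have hc1 : 1 - Real.exp (-r) < 1 := sub_lt_self _ (Real.exp_pos _)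
  have hhom : ∀ x, p + (1 - Real.exp (-r)) • (x - p) = lineMap p x (1 - Real.exp (-r)) :=
    fun x => by rw [lineMap_apply_module']; abel
  simp_rw [hhom]
  ext q
  simp only [mem_ofPred_eq, mem_image]
  constructor
  · rintro ⟨hq, h, hF⟩
    refine ⟨funkB I p q, ⟨q, hq, h, rfl⟩, ?_⟩
    rw [h.funkF_eq, log_one_add_div_self_eq_iff h.funkT0_pos] at hF
    rw [funkB_eq_lineMap, lineMap_lineMap_right, hF, lineMap_apply_one]
  · rintro ⟨_, ⟨q, -, h, rfl⟩, rfl⟩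
    have hT := h.funkT0_pos
    rw [funkB_eq_lineMap, lineMap_lineMap_right]
    have ha : 0 < (1 - Real.exp (-r)) * (1 + funkT0 I p q) := by positivity
    have haT : (1 - Real.exp (-r)) * (1 + funkT0 I p q) < 1 + funkT0 I p q := by nlinarith
    have hlt := funkLt_lineMap h ha haT
    refine ⟨hlt.2.1 (right_mem_segment ℝ _ _), hlt, ?_⟩
    rw [hlt.funkF_eq, log_one_add_div_self_eq_iff hlt.funkT0_pos,
      h.funkT0_lineMap ha haT]
    field_simp
    ring

/-- the future sphere `S(p,r) = {q ∈ Ω | p < q ∧ F(p,q) = r}` is the image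
of the part `B(p) = {b(p,q) | p < q}` of `K` visible from `p` under the homothety of
center `p` and ratio `1 − e^{−r}`. -/
theorem futureSphere_eq_homothety_image {n : ℕ} (hn : 1 ≤ n) (I : Set (Euc n))
    (hne : I.Nonempty) (hop : IsOpen I) (hconv : Convex ℝ I)
    (hcl : closure I ≠ Set.univ)
    (p : Euc n) (hp : p ∈ Omega I) (r : ℝ) (hr : 0 < r) :
    {q | q ∈ Omega I ∧ funkLt I p q ∧ funkF I p q = r} =
      (fun x => p + (1 - Real.exp (-r)) • (x - p)) ''
        {x | ∃ q ∈ Omega I, funkLt I p q ∧ funkB I p q = x} :=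
  futureSphere_eq_homothety_image_general I p r hr
end
end

section
/- The timelike length of the straight segment equals the Funk distance: for p, q ∈ Ω with p < q, the vector q − p lies in D(p + t • (q − p)) for every t ∈ [0,1], the function t ↦ P(p + t • (q − p), q − p) is integrable on [0,1], and ∫₀¹ P(p + t • (q − p), q − p) dt = F(p,q). -/
/-!
Along the line `t ↦ p + t • (q - p)` everything is one-dimensional. The ray hits `closure I`
first at the parameter `T = 1 + t₀(p,q)`, because the segment `[p,q]` misses it; so from the point
with parameter `t ∈ [0,1]` it takes time `τ = T - t`, and `P = 1 / (T - t)`. Hence the length of the segment is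
`∫₀¹ dt / (T - t) = log (T / t₀)`, which is the cross ratio `dist p b / dist q b` defining `F(p,q)`.
-/

open RealInnerProductSpace
open scoped Classical

noncomputable section

open intervalIntegral

section HitTime

variable {E : Type*} [AddCommGroup E] [Module ℝ E]

def hitSet (C : Set E) (x v : E) : Set ℝ := {t | 0 < t ∧ x + t • v ∈ C}

def hitTime (C : Set E) (x v : E) : ℝ := sInf (hitSet C x v)

theorem isLeast_hitSet_of_isLeast_add_smul {C : Set E} {x v : E} {s T : ℝ} (hs : 0 ≤ s)
    (hT : IsLeast (hitSet C (x + s • v) v) T) (hfree : ∀ r ∈ Set.Ioc 0 s, x + r • v ∉ C) :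
    IsLeast (hitSet C x v) (s + T) := by
  obtain ⟨⟨hT_pos, hT_mem⟩, hT_le⟩ := hT
  refine ⟨⟨by positivity, by rwa [add_smul, ← add_assoc]⟩, fun r ⟨hr, hrC⟩ => ?_⟩
  by_contra! hlt
  rcases le_or_gt r s with hrs | hsr
  · exact hfree r ⟨hr, hrs⟩ hrC
  · have : r - s ∈ hitSet C (x + s • v) v :=
      ⟨sub_pos.2 hsr, by rwa [add_assoc, ← add_smul, add_sub_cancel]⟩
    linarith [hT_le this]

variable [TopologicalSpace E] [ContinuousAdd E] [ContinuousSMul ℝ E]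

theorem isLeast_hitTime {C : Set E} {x v : E} (hC : IsClosed C) (hx : x ∉ C)
    (hhit : (hitSet C x v).Nonempty) : IsLeast (hitSet C x v) (hitTime C x v) := by
  have hbdd : BddBelow (hitSet C x v) := ⟨0, fun t ht => ht.1.le⟩
  have hclosed : IsClosed (hitSet C x v) := by
    have : hitSet C x v = Set.Ici 0 ∩ (fun t : ℝ => x + t • v) ⁻¹' C := by
      ext t
      refine ⟨fun ht => ⟨ht.1.le, ht.2⟩, fun ⟨ht, htC⟩ => ⟨ht.lt_of_ne ?_, htC⟩⟩
      rintro rfl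
      exact hx (by simpa using htC)
    rw [this]
    exact isClosed_Ici.inter (hC.preimage (by fun_prop))
  exact ⟨hclosed.csInf_mem hhit hbdd, fun t ht => csInf_le hbdd ht⟩

end HitTime

theorem integral_inv_one_add_sub {a : ℝ} (ha : 0 < a) :
    ∫ t in (0 : ℝ)..1, (1 + a - t)⁻¹ = Real.log ((1 + a) / a) := by
  rw [integral_comp_sub_left (fun x : ℝ => x⁻¹), integral_inv_of_pos (by simpa) (by linarith)]
  simp

section Funk

variable {n : ℕ} {I : Set (Euc n)} {p q : Euc n}

theorem isLeast_funkT0 (hq : q ∈ Omega I) (hpq : funkLt I p q) :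
    IsLeast (hitSet (closure I) q (q - p)) (funkT0 I p q) :=
  let ⟨_, _, t, ht, htI⟩ := hpq
  isLeast_hitTime isClosed_closure hq ⟨t, ht, subset_closure htI⟩

theorem funkF_eq_log (hpq : p ≠ q) (ht : 0 < funkT0 I p q) :
    funkF I p q = Real.log ((1 + funkT0 I p q) / funkT0 I p q) := by
  set t := funkT0 I p q
  have hp : dist p (funkB I p q) = (1 + t) * ‖q - p‖ := by
    rw [funkB, dist_eq_norm, show p - (q + t • (q - p)) = -((1 + t) • (q - p)) by module,
      norm_neg, norm_smul, Real.norm_of_nonneg (by positivity)]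
  have hq : dist q (funkB I p q) = t * ‖q - p‖ := by
    rw [funkB, dist_eq_norm, show q - (q + t • (q - p)) = -(t • (q - p)) by module,
      norm_neg, norm_smul, Real.norm_of_nonneg ht.le]
  rw [funkF, if_neg hpq, hp, hq,
    mul_div_mul_right _ _ (norm_ne_zero_iff.2 (sub_ne_zero.2 hpq.symm))]

theorem sub_mem_Dcone_of_funkLt (hpq : funkLt I p q) {t : ℝ} (ht : t ≤ 1) :
    q - p ∈ Dcone I (p + t • (q - p)) := by
  obtain ⟨-, -, s, hs, hsI⟩ := hpq
  refine ⟨1 - t + s, by linarith, ?_⟩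
  convert hsI using 1
  module

theorem tauF_of_funkLt (hq : q ∈ Omega I) (hpq : funkLt I p q) {t : ℝ} (ht : t ∈ Set.Icc 0 1) :
    tauF I (p + t • (q - p)) (q - p) = 1 + funkT0 I p q - t := by
  have hfree : ∀ r ∈ Set.Ioc 0 (1 - t), p + t • (q - p) + r • (q - p) ∉ closure I := by
    rintro r ⟨hr, hrt⟩
    refine hpq.2.1 ⟨1 - (t + r), t + r, by linarith, by linarith [ht.1], by ring, ?_⟩
    module
  have hT : IsLeast (hitSet (closure I) (p + t • (q - p) + (1 - t) • (q - p)) (q - p))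
      (funkT0 I p q) := by
    rw [show p + t • (q - p) + (1 - t) • (q - p) = q by module]
    exact isLeast_funkT0 hq hpq
  exact (isLeast_hitSet_of_isLeast_add_smul (sub_nonneg.2 ht.2) hT hfree).csInf_eq.trans
    (by ring)

end Funk

theorem funkF_eq_integral_pmink_general {n : ℕ} (I : Set (Euc n))
    (p q : Euc n) (hq : q ∈ Omega I)
    (hpq : funkLt I p q) :
    (∀ t ∈ Set.Icc (0:ℝ) 1, q - p ∈ Dcone I (p + t • (q - p))) ∧
    MeasureTheory.IntegrableOn (fun t => Pmink I (p + t • (q - p)) (q - p))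
      (Set.Icc (0:ℝ) 1) ∧
    (∫ t in (0:ℝ)..1, Pmink I (p + t • (q - p)) (q - p)) = funkF I p q := by
  set t₀ := funkT0 I p q
  have ht₀ : 0 < t₀ := (isLeast_funkT0 hq hpq).1.1
  have hP : Set.EqOn (fun t => Pmink I (p + t • (q - p)) (q - p)) (fun t => (1 + t₀ - t)⁻¹)
      (Set.Icc 0 1) := fun t ht => by
    dsimp only
    rw [Pmink, tauF_of_funkLt hq hpq ht, one_div]
  have hcont : ContinuousOn (fun t : ℝ => (1 + t₀ - t)⁻¹) (Set.Icc 0 1) :=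
    ContinuousOn.inv₀ (by fun_prop) fun t ht => (by linarith [ht.2] : (0 : ℝ) < 1 + t₀ - t).ne'
  refine ⟨fun t ht => sub_mem_Dcone_of_funkLt hpq ht.2,
    hcont.integrableOn_Icc.congr_fun hP.symm measurableSet_Icc, ?_⟩
  rw [integral_congr (by rwa [Set.uIcc_of_le zero_le_one]), integral_inv_one_add_sub ht₀,
    funkF_eq_log hpq.1 ht₀]

/-- the timelike length of the straight segment equals the Funk distance:
for `p < q`, the vector `q − p` is timelike along the segment, the integrand is
integrable on `[0,1]`, and `∫₀¹ P(p + t•(q−p), q−p) dt = F(p,q)`. -/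
theorem funkF_eq_integral_pmink {n : ℕ} (hn : 1 ≤ n) (I : Set (Euc n))
    (hne : I.Nonempty) (hop : IsOpen I) (hconv : Convex ℝ I)
    (hcl : closure I ≠ Set.univ)
    (p q : Euc n) (hp : p ∈ Omega I) (hq : q ∈ Omega I)
    (hpq : funkLt I p q) :
    (∀ t ∈ Set.Icc (0:ℝ) 1, q - p ∈ Dcone I (p + t • (q - p))) ∧
    MeasureTheory.IntegrableOn (fun t => Pmink I (p + t • (q - p)) (q - p))
      (Set.Icc (0:ℝ) 1) ∧
    (∫ t in (0:ℝ)..1, Pmink I (p + t • (q - p)) (q - p)) = funkF I p q :=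
  funkF_eq_integral_pmink_general I p q hq hpq
end
end
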